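/- arXiv:2002.12034 — 4 statements merged into one kernel-verified Lean document; each statement's English description precedes it below -/
import Mathlib

section
/- Let R_1, …, R_K and c_1, …, c_K be nonnegative reals with R_{k} > R_{k-1} and R_k − c_k ≥ R_{k-1} − c_{k-1} for all 2 ≤ k ≤ K. Define α_1 = 0 and α_k = (c_k − c_{k-1})/(R_k − R_{k-1}) for k ≥ 2. Then R_K − c_K ≤ Σ_{k=1}^{K} (1 − α_k)·R_k. -/
theorem stmt_6 (K : ℕ) (hK : 1 ≤ K) (R c : ℕ → ℝ)
    (hR : ∀ k, 0 ≤ R k) (hc : ∀ k, 0 ≤ c k)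
    (hmono : ∀ k, 2 ≤ k → k ≤ K → R (k - 1) < R k)
    (hwel : ∀ k, 2 ≤ k → k ≤ K → R (k - 1) - c (k - 1) ≤ R k - c k)
    (α : ℕ → ℝ) (hα1 : α 1 = 0)
    (hα : ∀ k, 2 ≤ k → k ≤ K → α k = (c k - c (k - 1)) / (R k - R (k - 1))) :
    R K - c K ≤ ∑ k ∈ Finset.Icc 1 K, (1 - α k) * R k := by
  induction K, hK using Nat.le_induction with
  | base =>
    simp [hα1]
    linarith [hc 1]
  | succ K hK ih =>
    have h1 : R K - c K ≤ ∑ k ∈ Finset.Icc 1 K, (1 - α k) * R k :=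
      ih (fun k h2 hk => hmono k h2 (by omega))
         (fun k h2 hk => hwel k h2 (by omega))
         (fun k h2 hk => hα k h2 (by omega))
    rw [Finset.sum_Icc_succ_top (by omega : 1 ≤ K + 1)]
    have hA := hα (K + 1) (by omega) le_rfl
    have hM := hmono (K + 1) (by omega) le_rfl
    have hW := hwel (K + 1) (by omega) le_rfl
    simp only [Nat.add_sub_cancel] at hA hM hW
    set d := R (K + 1) - R K with hd
    set e := c (K + 1) - c K with he
    have hdpos : 0 < d := by simp [hd]; linarith
    have hed : e ≤ d := by simp [hd, he]; linarith
    have hα2 : 1 - α (K + 1) = (d - e) / d := by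
      rw [hA]; field_simp
    have hRd : d ≤ R (K + 1) := by
      have := hR K; simp [hd]; linarith
    have hfrac : 0 ≤ (d - e) / d := div_nonneg (by linarith) hdpos.le
    have key : (d - e) / d * d ≤ (d - e) / d * R (K + 1) :=
      mul_le_mul_of_nonneg_left hRd hfrac
    rw [div_mul_cancel₀ _ hdpos.ne'] at key
    rw [hα2]
    have : d - e ≤ (d - e) / d * R (K + 1) := key
    simp only [hd, he] at this
    linarith
end

section
/- In the 2-action, 2-item gap setting with parameter γ ∈ (0,1/4] and δ ≤ γ², where the payment p for the single item and p_0 = 0 for the empty set must satisfy the δ-IC constraint (1+δ)·p − (1/γ + 2 − γ) ≥ γ·p − 1 (i.e., action 2 is δ-preferred to action 1), the payment satisfies p ≥ (1−γ)²/(γ(1+δ−γ)), and consequently the principal's payoff 1/γ − p is at most 1/(1+γ²−γ). -/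
theorem stmt_15 (γ δ p : ℝ) (hγ0 : 0 < γ) (hγ : γ ≤ 1 / 4)
    (hδ0 : 0 ≤ δ) (hδ : δ ≤ γ ^ 2)
    (hIC : (1 + δ) * p - (1 / γ + 2 - γ) ≥ γ * p - 1) :
    p ≥ (1 - γ) ^ 2 / (γ * (1 + δ - γ)) ∧ 1 / γ - p ≤ 1 / (1 + γ ^ 2 - γ) := by
  have hd : (0:ℝ) < 1 + δ - γ := by nlinarith
  have hgd : (0:ℝ) < γ * (1 + δ - γ) := by positivity
  have hq : (0:ℝ) < 1 + γ ^ 2 - γ := by nlinarith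
  have hIC' : (1 + δ - γ) * p * γ ≥ 1 + γ - γ ^ 2 := by
    have h := mul_le_mul_of_nonneg_right hIC (le_of_lt hγ0)
    have : γ * (1/γ) = 1 := mul_one_div_cancel (ne_of_gt hγ0)
    nlinarith [this]
  constructor
  · rw [ge_iff_le, div_le_iff₀ hgd]
    nlinarith
  · have hp : 0 < p := by nlinarith
    rw [sub_le_iff_le_add, div_le_iff₀ hγ0]
    have ha : (1 + γ ^ 2 - γ) * (1 / (1 + γ ^ 2 - γ)) = 1 := mul_one_div_cancel (ne_of_gt hq)
    nlinarith [mul_pos hp hγ0, mul_le_mul_of_nonneg_left hδ (le_of_lt (mul_pos hp hγ0)), ha, mul_pos hq hγ0]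
end

section
/- Consider the δ-implementability dual LP for action a_i: maximize Σ_{i'≠i} λ_{i'}(c_i − c_{i'}) subject to (1+δ)·q_{i,S}·Σ_{i'≠i} λ_{i'} ≤ Σ_{i'≠i} λ_{i'}·q_{i',S} for all S with q_{i,S} > 0, and λ_{i'} ≥ 0. For δ > 0, the only feasible solution is λ_{i'} = 0 for all i'. Consequently (by LP duality), every action can be δ-implemented up to tie-breaking for every δ > 0. -/
/-! Summing the constraints over the support of `qi` gives `(1 + δ) L ≤ L` for the total weight
`L = ∑ λ`, because `qi` has mass at least one on its support while the mixture `∑ λ q'` has total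
mass `L`. With `δ > 0` and `L ≥ 0` this forces `L = 0`, hence every `λ` vanishes. -/

open Finset

theorem Finset.sum_le_sum_filter_pos {α M : Type*} [AddCommMonoid M] [LinearOrder M]
    [IsOrderedAddMonoid M] (s : Finset α) (f : α → M) :
    ∑ a ∈ s, f a ≤ ∑ a ∈ s with 0 < f a, f a := by
  rw [← sum_filter_add_sum_filter_not s (0 < f ·)]
  exact add_le_of_nonpos_right (sum_nonpos fun a ha => not_lt.1 (mem_filter.1 ha).2)

theorem sum_sum_mul_eq_sum_of_sum_eq_one {Ω ι : Type*} [Fintype Ω] (t : Finset ι)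
    (lam : ι → ℝ) (q : ι → Ω → ℝ) (hq : ∀ i, ∑ S, q i S = 1) :
    ∑ S, ∑ i ∈ t, lam i * q i S = ∑ i ∈ t, lam i := by
  rw [sum_comm]
  simp only [← mul_sum, hq, mul_one]

theorem stmt_16_general {Ω ι : Type*} [Fintype Ω] [Fintype ι]
    (qi : Ω → ℝ) (q' : ι → Ω → ℝ) (δ : ℝ) (hδ : 0 < δ)
    (hqisum : ∑ S : Ω, qi S = 1)
    (hq' : ∀ i' S, 0 ≤ q' i' S) (hq'sum : ∀ i', ∑ S : Ω, q' i' S = 1)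
    (lam : ι → ℝ) (hlam : ∀ i', 0 ≤ lam i')
    (hfeas : ∀ S : Ω, 0 < qi S →
      (1 + δ) * qi S * (∑ i', lam i') ≤ ∑ i', lam i' * q' i' S) :
    ∀ i', lam i' = 0 := by
  set L := ∑ i', lam i'
  have hL : 0 ≤ L := sum_nonneg fun i _ => hlam i
  have hsum : (1 + δ) * L ≤ L := calc
    (1 + δ) * L = (1 + δ) * L * ∑ S, qi S := by rw [hqisum, mul_one]
    _ ≤ (1 + δ) * L * ∑ S with 0 < qi S, qi S :=
      mul_le_mul_of_nonneg_left (sum_le_sum_filter_pos univ qi) (by positivity)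
    _ = ∑ S with 0 < qi S, (1 + δ) * qi S * L := by
      rw [mul_sum]
      exact sum_congr rfl fun S _ => by ring
    _ ≤ ∑ S with 0 < qi S, ∑ i', lam i' * q' i' S :=
      sum_le_sum fun S hS => hfeas S (mem_filter.1 hS).2
    _ ≤ ∑ S, ∑ i', lam i' * q' i' S :=
      sum_le_sum_of_subset_of_nonneg (filter_subset _ _) fun S _ _ =>
        sum_nonneg fun i _ => mul_nonneg (hlam i) (hq' i S)
    _ = L := sum_sum_mul_eq_sum_of_sum_eq_one univ lam q' hq'sum
  have hL0 : L = 0 := by nlinarith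
  exact fun i' => (sum_eq_zero_iff_of_nonneg fun i _ => hlam i).1 hL0 i' (mem_univ i')

theorem stmt_16 {Ω ι : Type*} [Fintype Ω] [Fintype ι]
    (qi : Ω → ℝ) (q' : ι → Ω → ℝ) (δ : ℝ) (hδ : 0 < δ)
    (hqi : ∀ S, 0 ≤ qi S) (hqisum : ∑ S : Ω, qi S = 1)
    (hq' : ∀ i' S, 0 ≤ q' i' S) (hq'sum : ∀ i', ∑ S : Ω, q' i' S = 1)
    (lam : ι → ℝ) (hlam : ∀ i', 0 ≤ lam i')
    (hfeas : ∀ S : Ω, 0 < qi S →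
      (1 + δ) * qi S * (∑ i', lam i') ≤ ∑ i', lam i' * q' i' S) :
    ∀ i', lam i' = 0 :=
  stmt_16_general qi q' δ hδ hqisum hq' hq'sum lam hlam hfeas
end

section
/- In the counterexample setting with parameters δ ∈ (0, 1/2] and ε > 0, M = ε/δ: there are 2 actions and 2 items with probabilities q_{1,1} = 1/4, q_{1,2} = 2ε/(3(M+ε)), q_{2,1} = 0, q_{2,2} = 1; rewards r_1 = 4ε/3, r_2 = M+ε; costs c_1 = 0, c_2 = M − Mε/(2(M+ε)). The contract paying M − ε/3 for the outcome {item 2 only} and zero otherwise δ-incentivizes action 2: (1+δ)·(M − ε/3)·Pr_2[{2}] − c_2 ≥ Pr_1[{2}]·(M − ε/3), where Pr_2[{2}] = 1 and Pr_1[{2}] = (3/4)·2ε/(3(M+ε)) = ε/(2(M+ε)). -/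
theorem stmt_18 (δ ε : ℝ) (hδ0 : 0 < δ) (hδ : δ ≤ 1 / 2) (hε : 0 < ε)
    (M : ℝ) (hM : M = ε / δ) :
    (1 + δ) * (M - ε / 3) * 1 - (M - M * ε / (2 * (M + ε))) ≥
      (ε / (2 * (M + ε))) * (M - ε / 3) := by
  have hMpos : 0 < M := by rw [hM]; positivity
  have hden : 0 < M + ε := by linarith
  have hδM : δ * M = ε := by rw [hM]; field_simp
  rw [ge_iff_le, ← sub_nonneg, ← hδM]
  have hden' : M + δ * M ≠ 0 := by rw [hδM]; positivity
  have key : (1 + δ) * (M - δ * M / 3) * 1 - (M - M * (δ * M) / (2 * (M + δ * M))) -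
      δ * M / (2 * (M + δ * M)) * (M - δ * M / 3) =
      (2 * (δ * M) / 3 - δ * (δ * M) / 3) + (δ * M) ^ 2 / (6 * (M + δ * M)) := by
    field_simp
    ring
  rw [key]
  have h1 : 0 ≤ 2 * (δ * M) / 3 - δ * (δ * M) / 3 := by nlinarith
  have h2 : 0 < M + δ * M := by rw [hδM]; linarith
  positivity
end
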